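/- arXiv:2403.08275 — 5 statements merged into one kernel-verified Lean document; each statement's English description precedes it below -/
import Mathlib

section
/- For grid functions v, w ∈ ℓ²(ℤ), the identity ⟨D(vw), w⟩ = (Δx/2)⟨(D₊v)·(Dw), w⟩ + (1/2)⟨(S⁻w)·(Dv), w⟩ holds, where S⁻w(j) = w(j-1), D is the central difference, D₊ the forward difference, and ⟨·,·⟩ the scaled ℓ² inner product. -/
/-- Forward difference operator. -/
noncomputable def Dp (dx : ℝ) (v : ℤ → ℝ) (j : ℤ) : ℝ := (v (j + 1) - v j) / dx

/-- Central difference operator. -/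
noncomputable def Dc (dx : ℝ) (v : ℤ → ℝ) (j : ℤ) : ℝ := (v (j + 1) - v (j - 1)) / (2 * dx)

/-- Scaled discrete inner product ⟨v,w⟩ = Δx ∑_j v_j w_j. -/
noncomputable def ip (dx : ℝ) (v w : ℤ → ℝ) : ℝ := dx * ∑' j : ℤ, v j * w j

private lemma sq_summable_of_memℓp (v : ℤ → ℝ) (hv : Memℓp v 2) :
    Summable (fun j : ℤ => (v j)^2) := by
  have h := hv.summable (p := 2) (by norm_num)
  have e : ∀ x : ℝ, ‖x‖ ^ ((2:ENNReal).toReal) = x ^ 2 := by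
    intro x
    rw [show ((2:ENNReal).toReal) = ((2:ℕ):ℝ) by norm_num, Real.rpow_natCast,
      Real.norm_eq_abs, sq_abs]
  simpa [e] using h

/-- ⟨D(vw), w⟩ = (Δx/2)⟨(D₊v)(Dw), w⟩ + (1/2)⟨(S⁻w)(Dv), w⟩ for v, w ∈ ℓ²(ℤ). -/
theorem product_difference_identity (dx : ℝ) (hdx : 0 < dx) (v w : ℤ → ℝ)
    (hv : Memℓp v 2) (hw : Memℓp w 2) :
    ip dx (Dc dx (fun i => v i * w i)) w =
      (dx / 2) * ip dx (fun j => Dp dx v j * Dc dx w j) w +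
        (1 / 2) * ip dx (fun j => w (j - 1) * Dc dx v j) w := by
  have hdx' : dx ≠ 0 := ne_of_gt hdx
  have hv2 : Summable (fun j : ℤ => (v j)^2) := sq_summable_of_memℓp v hv
  have hw2 : Summable (fun j : ℤ => (w j)^2) := sq_summable_of_memℓp w hw
  -- bound on w
  set M : ℝ := ∑' j : ℤ, (w j)^2 with hM
  have hwb : ∀ j : ℤ, |w j| ≤ Real.sqrt M := by
    intro j
    have h1 : (w j)^2 ≤ M := Summable.le_tsum hw2 j (fun _ _ => sq_nonneg _)
    calc |w j| = Real.sqrt ((w j)^2) := by rw [Real.sqrt_sq_eq_abs]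
      _ ≤ Real.sqrt M := Real.sqrt_le_sqrt h1
  -- shifts
  have hshift : ∀ (f : ℤ → ℝ), Summable f → ∀ a : ℤ, Summable (fun j => f (j + a)) := by
    intro f hf a
    exact (Equiv.addRight a).summable_iff.2 hf
  -- products of shifts of v and w are ℓ¹
  have hvw : ∀ a b : ℤ, Summable (fun j : ℤ => |v (j + a)| * |w (j + b)|) := by
    intro a b
    apply Summable.of_nonneg_of_le (fun j => by positivity)
      (fun j => ?_) (((hshift _ hv2 a).add (hshift _ hw2 b)).mul_left (1/2 : ℝ))
    nlinarith [sq_nonneg (|v (j+a)| - |w (j+b)|), abs_nonneg (v (j+a)), abs_nonneg (w (j+b)),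
        sq_abs (v (j+a)), sq_abs (w (j+b))]
  -- triple products
  set T : ℤ → ℤ → ℤ → ℤ → ℝ := fun a b c j => v (j + a) * w (j + b) * w (j + c) with hTdef
  have hT : ∀ a b c : ℤ, Summable (T a b c) := by
    intro a b c
    rw [← summable_abs_iff]
    apply Summable.of_nonneg_of_le (fun j => abs_nonneg _) (fun j => ?_)
      ((hvw a b).mul_right (Real.sqrt M))
    simp only [hTdef, abs_mul]
    exact mul_le_mul_of_nonneg_left (hwb _) (by positivity)
  -- the telescoping function
  set A : ℤ → ℝ := fun j => (v (j + 1) + v j) * w (j + 1) * w j with hAdef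
  have hAeq : ∀ j, A j = T 1 1 0 j + T 0 1 0 j := by
    intro j; simp only [hAdef, hTdef, add_zero]; ring
  have hA : Summable A := ((hT 1 1 0).add (hT 0 1 0)).congr (fun j => (hAeq j).symm)
  have hA' : Summable (fun j => A (j - 1)) := by
    exact (Equiv.subRight (1:ℤ)).summable_iff.2 hA
  have hAshift : ∑' j : ℤ, A (j - 1) = ∑' j : ℤ, A j := (Equiv.subRight (1:ℤ)).tsum_eq A
  -- the three integrands
  set F : ℤ → ℝ := fun j => Dc dx (fun i => v i * w i) j * w j with hFdef
  set P : ℤ → ℝ := fun j => Dp dx v j * Dc dx w j * w j with hPdef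
  set Q : ℤ → ℝ := fun j => w (j - 1) * Dc dx v j * w j with hQdef
  have hPeq : ∀ j, P j = (1/(2*dx^2)) * (T 1 1 0 j - T 1 (-1) 0 j - T 0 1 0 j + T 0 (-1) 0 j) := by
    intro j
    simp only [hPdef, hTdef, Dp, Dc, add_zero, sub_eq_add_neg]
    field_simp
    ring
  have hQeq : ∀ j, Q j = (1/(2*dx)) * (T 1 (-1) 0 j - T (-1) (-1) 0 j) := by
    intro j
    simp only [hQdef, hTdef, Dc, add_zero, sub_eq_add_neg]
    field_simp
  have hP : Summable P := by
    refine Summable.congr ?_ (fun j => (hPeq j).symm)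
    exact ((((hT 1 1 0).sub (hT 1 (-1) 0)).sub (hT 0 1 0)).add (hT 0 (-1) 0)).mul_left _
  have hQ : Summable Q := by
    refine Summable.congr ?_ (fun j => (hQeq j).symm)
    exact ((hT 1 (-1) 0).sub (hT (-1) (-1) 0)).mul_left _
  -- key pointwise identity
  have hkey : ∀ j, F j = (dx/2) * P j + (1/2) * Q j + (1/(4*dx)) * (A j - A (j - 1)) := by
    intro j
    simp only [hFdef, hPdef, hQdef, hAdef, Dp, Dc]
    have h1 : j - 1 + 1 = j := by ring
    rw [h1]
    field_simp
    ring
  -- sum up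
  have hsplit : ∑' j, F j = (dx/2) * ∑' j, P j + (1/2) * ∑' j, Q j := by
    calc ∑' j, F j
        = ∑' j, ((dx/2) * P j + (1/2) * Q j + (1/(4*dx)) * (A j - A (j - 1))) :=
          tsum_congr hkey
      _ = (∑' j, ((dx/2) * P j + (1/2) * Q j)) + ∑' j, (1/(4*dx)) * (A j - A (j - 1)) := by
          refine Summable.tsum_add ((hP.mul_left _).add (hQ.mul_left _)) ((hA.sub hA').mul_left _)
      _ = (dx/2) * (∑' j, P j) + (1/2) * (∑' j, Q j) := by
          rw [Summable.tsum_add (hP.mul_left _) (hQ.mul_left _), tsum_mul_left, tsum_mul_left,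
            tsum_mul_left, Summable.tsum_sub hA hA', hAshift, sub_self, mul_zero, add_zero]
  simp only [ip]
  rw [show (∑' j : ℤ, Dc dx (fun i => v i * w i) j * w j) = ∑' j, F j from rfl,
    show (∑' j : ℤ, (Dp dx v j * Dc dx w j) * w j) = ∑' j, P j from rfl,
    show (∑' j : ℤ, (w (j - 1) * Dc dx v j) * w j) = ∑' j, Q j from rfl, hsplit]
  ring
end

section
/- The discrete fractional Laplacian 𝔻^α defined by (𝔻^α u)_j = (c_α/Δx^α) ∑_{k≠j} (u_k - u_j)(1 - (-1)^{j-k})/|k-j|^{1+α} is symmetric with respect to the scaled ℓ² inner product: ⟨𝔻^α u, v⟩ = ⟨u, 𝔻^α v⟩ for all u, v ∈ ℓ²(ℤ). -/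
/-- Discrete fractional Laplacian
(𝔻^α u)_j = (c_α/Δx^α) ∑_{k≠j} (u_k - u_j)(1 - (-1)^{j-k})/|k-j|^{1+α}. -/
noncomputable def fracLap (cα α dx : ℝ) (u : ℤ → ℝ) (j : ℤ) : ℝ :=
  (cα / dx ^ α) * ∑' k : {k : ℤ // k ≠ j},
    (u k - u j) * (1 - (-1 : ℝ) ^ (j - (k : ℤ))) / ((|(k : ℤ) - j| : ℤ) : ℝ) ^ (1 + α)

section aux

private lemma neg_one_zpow_sub (j k : ℤ) : ((-1 : ℝ)) ^ (k - j) = (-1 : ℝ) ^ (j - k) := by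
  rcases Int.even_or_odd (j - k) with h | h
  · rw [h.neg_one_zpow, (by simpa using h.neg : Even (k - j)).neg_one_zpow]
  · rw [h.neg_one_zpow, (by simpa using h.neg : Odd (k - j)).neg_one_zpow]

private lemma abs_neg_one_zpow_le (m : ℤ) : |(-1 : ℝ) ^ m| ≤ 1 := by
  rcases Int.even_or_odd m with h | h
  · rw [h.neg_one_zpow]; norm_num
  · rw [h.neg_one_zpow]; norm_num

/-- shear equivalence (j,k) ↦ (j, j-k) -/
private def shear1 : ℤ × ℤ ≃ ℤ × ℤ where
  toFun p := (p.1, p.1 - p.2)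
  invFun p := (p.1, p.1 - p.2)
  left_inv p := by simp
  right_inv p := by simp

/-- shear equivalence (j,k) ↦ (k, j-k) -/
private def shear2 : ℤ × ℤ ≃ ℤ × ℤ where
  toFun p := (p.2, p.1 - p.2)
  invFun p := (p.1 + p.2, p.1)
  left_inv p := by simp
  right_inv p := by simp

end aux

/-- Symmetry of the discrete fractional Laplacian: ⟨𝔻^α u, v⟩ = ⟨u, 𝔻^α v⟩. -/
theorem fracLap_symm (cα α dx : ℝ) (hcα : 0 < cα) (hα : α ∈ Set.Ico (1 : ℝ) 2)
    (hdx : 0 < dx) (u v : ℤ → ℝ) (hu : Memℓp u 2) (hv : Memℓp v 2) :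
    ip dx (fracLap cα α dx u) v = ip dx u (fracLap cα α dx v) := by
  obtain ⟨hα1, hα2⟩ := hα
  set K : ℤ → ℤ → ℝ :=
    fun j k => (1 - (-1 : ℝ) ^ (j - k)) / ((|k - j| : ℤ) : ℝ) ^ (1 + α) with hKdef
  set g : ℤ → ℝ := fun m => 2 / ((|m| : ℤ) : ℝ) ^ (1 + α) with hgdef
  have hgnonneg : ∀ m, 0 ≤ g m := by
    intro m
    exact div_nonneg (by norm_num) (Real.rpow_nonneg (by positivity) _)
  have hKsymm : ∀ j k, K k j = K j k := by
    intro j k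
    simp only [hKdef]
    rw [neg_one_zpow_sub, abs_sub_comm]
  have hKabs : ∀ j k, |K j k| ≤ g (j - k) := by
    intro j k
    simp only [hKdef, hgdef]
    rw [abs_sub_comm k j]
    rw [abs_div, abs_of_nonneg (Real.rpow_nonneg (by positivity) _)]
    rcases eq_or_lt_of_le
      (Real.rpow_nonneg (by positivity : (0:ℝ) ≤ ((|j - k| : ℤ) : ℝ)) (1 + α)) with h | h
    · rw [← h, div_zero, div_zero]
    · apply (div_le_div_iff_of_pos_right h).mpr
      calc |1 - (-1 : ℝ) ^ (j - k)| ≤ |(1 : ℝ)| + |(-1 : ℝ) ^ (j - k)| := abs_sub _ _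
        _ ≤ 1 + 1 := by simpa using abs_neg_one_zpow_le (j - k)
        _ = 2 := by norm_num
  have hg : Summable g := by
    have h := Real.summable_abs_int_rpow (b := 1 + α) (by linarith)
    refine (h.mul_left 2).congr fun m => ?_
    simp only [hgdef]
    rw [Real.rpow_neg (abs_nonneg _), ← div_eq_mul_inv, Int.cast_abs]
  have hsq : ∀ w : ℤ → ℝ, Memℓp w 2 → Summable (fun j => w j ^ 2) := by
    intro w hw
    have := hw.summable (p := 2) (by norm_num)
    refine this.congr fun j => ?_
    rw [ENNReal.toReal_ofNat, Real.rpow_two, Real.norm_eq_abs, sq_abs]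
  have hu2 := hsq u hu
  have hv2 := hsq v hv
  -- summability of a j * g (j - k) and a k * g (j - k)
  have key : ∀ a : ℤ → ℝ, Summable a → (∀ j, 0 ≤ a j) →
      Summable (fun p : ℤ × ℤ => a p.1 * g (p.1 - p.2)) ∧
      Summable (fun p : ℤ × ℤ => a p.2 * g (p.1 - p.2)) := by
    intro a ha hanonneg
    have hprod : Summable (fun p : ℤ × ℤ => a p.1 * g p.2) :=
      ha.mul_of_nonneg hg hanonneg hgnonneg
    constructor
    · exact (hprod.comp_injective shear1.injective).congr fun p => rfl
    · exact (hprod.comp_injective shear2.injective).congr fun p => rfl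
  -- dominating function
  set B : ℤ × ℤ → ℝ :=
    fun p => (u p.1 ^ 2 + u p.2 ^ 2 + v p.1 ^ 2 + v p.2 ^ 2) * g (p.1 - p.2) with hBdef
  have hB : Summable B := by
    have h1 := (key _ hu2 (fun j => sq_nonneg _)).1
    have h2 := (key _ hu2 (fun j => sq_nonneg _)).2
    have h3 := (key _ hv2 (fun j => sq_nonneg _)).1
    have h4 := (key _ hv2 (fun j => sq_nonneg _)).2
    refine (((h1.add h2).add h3).add h4).congr fun p => ?_
    simp only [hBdef]; ring
  -- the two double families
  set Hu : ℤ × ℤ → ℝ := fun p => (u p.2 - u p.1) * K p.1 p.2 * v p.1 with hHudef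
  set Hv : ℤ × ℤ → ℝ := fun p => (v p.2 - v p.1) * K p.1 p.2 * u p.1 with hHvdef
  have hbound : ∀ (w z : ℤ → ℝ) (p : ℤ × ℤ),
      |(w p.2 - w p.1) * K p.1 p.2 * z p.1| ≤
        (w p.1 ^ 2 + w p.2 ^ 2 + z p.1 ^ 2 + z p.2 ^ 2) * g (p.1 - p.2) := by
    intro w z p
    have h1 : |(w p.2 - w p.1) * K p.1 p.2 * z p.1|
        = |w p.2 - w p.1| * |K p.1 p.2| * |z p.1| := by rw [abs_mul, abs_mul]
    have h2 : |w p.2 - w p.1| ≤ |w p.2| + |w p.1| := abs_sub _ _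
    have h3 := hKabs p.1 p.2
    have h4 := hgnonneg (p.1 - p.2)
    have h5 : (0:ℝ) ≤ |w p.2 - w p.1| := abs_nonneg _
    have h6 : (0:ℝ) ≤ |z p.1| := abs_nonneg _
    have h7 : (0:ℝ) ≤ |K p.1 p.2| := abs_nonneg _
    have h8 : |w p.2 - w p.1| * |K p.1 p.2| * |z p.1| ≤
        (|w p.2| + |w p.1|) * g (p.1 - p.2) * |z p.1| := by
      apply mul_le_mul_of_nonneg_right _ h6
      exact mul_le_mul h2 h3 h7 (by positivity)
    have h9 : (|w p.2| + |w p.1|) * |z p.1| ≤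
        w p.1 ^ 2 + w p.2 ^ 2 + z p.1 ^ 2 + z p.2 ^ 2 := by
      nlinarith [sq_nonneg (|w p.2| - |z p.1|), sq_nonneg (|w p.1| - |z p.1|),
        sq_abs (w p.1), sq_abs (w p.2), sq_abs (z p.1), sq_nonneg (z p.2)]
    calc |(w p.2 - w p.1) * K p.1 p.2 * z p.1|
        = |w p.2 - w p.1| * |K p.1 p.2| * |z p.1| := h1
      _ ≤ (|w p.2| + |w p.1|) * g (p.1 - p.2) * |z p.1| := h8
      _ = (|w p.2| + |w p.1|) * |z p.1| * g (p.1 - p.2) := by ring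
      _ ≤ (w p.1 ^ 2 + w p.2 ^ 2 + z p.1 ^ 2 + z p.2 ^ 2) * g (p.1 - p.2) :=
          mul_le_mul_of_nonneg_right h9 h4
  have hHu : Summable Hu := by
    apply Summable.of_abs
    exact hB.of_nonneg_of_le (fun p => abs_nonneg _) (fun p => hbound u v p)
  have hHv : Summable Hv := by
    apply Summable.of_abs
    refine hB.of_nonneg_of_le (fun p => abs_nonneg _) (fun p => (hbound v u p).trans ?_)
    apply le_of_eq; simp only [hBdef]; ring
  -- rewrite fracLap as a tsum over ℤ
  have hFL : ∀ (w : ℤ → ℝ) (j : ℤ),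
      fracLap cα α dx w j = (cα / dx ^ α) * ∑' k : ℤ, (w k - w j) * K j k := by
    intro w j
    unfold fracLap
    congr 1
    have hsupp : Function.support
        (fun k : ℤ => (w k - w j) * (1 - (-1 : ℝ) ^ (j - k)) / ((|k - j| : ℤ) : ℝ) ^ (1 + α))
        ⊆ {k : ℤ | k ≠ j} := by
      intro k hk
      simp only [Function.mem_support] at hk
      intro hkj
      apply hk
      subst hkj
      simp
    calc (∑' k : {k : ℤ // k ≠ j},
          (w k - w j) * (1 - (-1 : ℝ) ^ (j - (k : ℤ))) / ((|(k : ℤ) - j| : ℤ) : ℝ) ^ (1 + α))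
        = ∑' k : ℤ, (w k - w j) * (1 - (-1 : ℝ) ^ (j - k)) / ((|k - j| : ℤ) : ℝ) ^ (1 + α) :=
          tsum_subtype_eq_of_support_subset hsupp
      _ = ∑' k : ℤ, (w k - w j) * K j k := by
          refine tsum_congr fun k => ?_
          rw [hKdef, mul_div_assoc]
  -- rewrite the inner product as a double sum
  have hip : ∀ (w z : ℤ → ℝ),
      Summable (fun p : ℤ × ℤ => (w p.2 - w p.1) * K p.1 p.2 * z p.1) →
      ip dx (fracLap cα α dx w) z =
        dx * ((cα / dx ^ α) * ∑' p : ℤ × ℤ, (w p.2 - w p.1) * K p.1 p.2 * z p.1) := by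
    intro w z hw
    unfold ip
    congr 1
    calc (∑' j : ℤ, fracLap cα α dx w j * z j)
        = ∑' j : ℤ, (cα / dx ^ α) * ∑' k : ℤ, (w k - w j) * K j k * z j := by
          refine tsum_congr fun j => ?_
          rw [hFL, mul_assoc, ← tsum_mul_right]
      _ = (cα / dx ^ α) * ∑' j : ℤ, ∑' k : ℤ, (w k - w j) * K j k * z j := tsum_mul_left
      _ = (cα / dx ^ α) * ∑' p : ℤ × ℤ, (w p.2 - w p.1) * K p.1 p.2 * z p.1 := by
          rw [Summable.tsum_prod' hw (fun j => hw.prod_factor j)]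
  -- main argument: the double sums agree
  have hswap : ∀ (H : ℤ × ℤ → ℝ), ∑' p : ℤ × ℤ, H p.swap = ∑' p : ℤ × ℤ, H p :=
    fun H => (Equiv.prodComm ℤ ℤ).tsum_eq H
  have hHuswap : Summable (fun p : ℤ × ℤ => Hu p.swap) :=
    hHu.comp_injective Prod.swap_injective
  have hHvswap : Summable (fun p : ℤ × ℤ => Hv p.swap) :=
    hHv.comp_injective Prod.swap_injective
  have hmain : ∑' p : ℤ × ℤ, Hu p = ∑' p : ℤ × ℤ, Hv p := by
    have h2 : (2 : ℝ) * ∑' p : ℤ × ℤ, Hu p = 2 * ∑' p : ℤ × ℤ, Hv p := by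
      calc (2 : ℝ) * ∑' p : ℤ × ℤ, Hu p
          = (∑' p : ℤ × ℤ, Hu p) + ∑' p : ℤ × ℤ, Hu p.swap := by rw [hswap Hu]; ring
        _ = ∑' p : ℤ × ℤ, (Hu p + Hu p.swap) := (Summable.tsum_add hHu hHuswap).symm
        _ = ∑' p : ℤ × ℤ, (Hv p + Hv p.swap) := by
            refine tsum_congr fun p => ?_
            simp only [hHudef, hHvdef, Prod.fst_swap, Prod.snd_swap]
            rw [hKsymm p.2 p.1]
            ring
        _ = (∑' p : ℤ × ℤ, Hv p) + ∑' p : ℤ × ℤ, Hv p.swap := Summable.tsum_add hHv hHvswap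
        _ = 2 * ∑' p : ℤ × ℤ, Hv p := by rw [hswap Hv]; ring
    linarith
  rw [hip u v hHu]
  rw [show ip dx u (fracLap cα α dx v) = ip dx (fracLap cα α dx v) u from by
    unfold ip; rw [tsum_congr fun j => mul_comm (u j) _]]
  rw [hip v u hHv, hmain]
end

section
/- The discrete fractional Laplacian commutes with the central difference operator in the weak sense: for all u, v ∈ ℓ²(ℤ), ⟨𝔻^α(Du), v⟩ = -⟨u, 𝔻^α(Dv)⟩ = ⟨D(𝔻^α u), v⟩, where D is the central difference operator. -/
open scoped ENNReal

theorem Memℓp.comp_equiv {ι ι' E : Type*} [NormedAddCommGroup E] {p : ℝ≥0∞} {f : ι → E}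
    (hf : Memℓp f p) (e : ι' ≃ ι) : Memℓp (f ∘ e) p := by
  rcases p.trichotomy with rfl | rfl | hp
  · exact memℓp_zero (hf.finite_dsupport.preimage e.injective.injOn)
  · refine memℓp_infty ?_
    convert hf.bddAbove using 1
    exact e.surjective.range_comp fun i => ‖f i‖
  · exact memℓp_gen (e.summable_iff.mpr (hf.summable hp))

theorem Memℓp.summable_sq {ι : Type*} {f : ι → ℝ} (hf : Memℓp f 2) :
    Summable fun i => f i ^ 2 := by
  simpa using hf.summable (by simp)

theorem Memℓp.summable_mul {ι : Type*} {f g : ι → ℝ} (hf : Memℓp f 2) (hg : Memℓp g 2) :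
    Summable fun i => f i * g i := by
  refine Summable.of_norm ?_
  simpa only [norm_mul] using
    lp.summable_mul (by simpa using Real.HolderConjugate.two_two) ⟨f, hf⟩ ⟨g, hg⟩

theorem summable_mul_kernel_sub_fst {a K : ℤ → ℝ} (ha : Summable a) (ha₀ : 0 ≤ a)
    (hK : Summable K) (hK₀ : 0 ≤ K) : Summable fun p : ℤ × ℤ => a p.1 * K (p.1 - p.2) := by
  let e : ℤ × ℤ ≃ ℤ × ℤ := Equiv.prodShear (Equiv.refl ℤ) Equiv.subLeft
  refine e.summable_iff.mp ((ha.mul_of_nonneg hK ha₀ hK₀).congr fun p => ?_)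
  simp [e]

theorem summable_mul_mul_kernel_sub {f g K : ℤ → ℝ} (hf : Memℓp f 2) (hg : Memℓp g 2)
    (hK : Summable K) : Summable fun p : ℤ × ℤ => f p.1 * g p.2 * K (p.1 - p.2) := by
  have hf₂ : Summable fun p : ℤ × ℤ => f p.1 ^ 2 * |K (p.1 - p.2)| :=
    summable_mul_kernel_sub_fst (K := fun m => |K m|) hf.summable_sq (fun _ => sq_nonneg _)
      hK.abs fun _ => abs_nonneg _
  have hg₂ : Summable fun p : ℤ × ℤ => g p.2 ^ 2 * |K (p.1 - p.2)| := by
    have hK' : Summable fun m => |K (-m)| := ((Equiv.neg ℤ).summable_iff.mpr hK).abs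
    refine (Equiv.prodComm ℤ ℤ).summable_iff.mp ((summable_mul_kernel_sub_fst
      (K := fun m => |K (-m)|) hg.summable_sq (fun _ => sq_nonneg _) hK'
      fun _ => abs_nonneg _).congr fun p => ?_)
    simp
  refine Summable.of_norm_bounded ((hf₂.add hg₂).div_const 2) fun p => ?_
  rw [Real.norm_eq_abs, abs_mul, abs_mul, ← add_mul, mul_div_right_comm]
  gcongr
  nlinarith [sq_nonneg (|f p.1| - |g p.2|), sq_abs (f p.1), sq_abs (g p.2)]

noncomputable def nonlocalOp (K f : ℤ → ℝ) (j : ℤ) : ℝ := ∑' k, (f k - f j) * K (j - k)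

section nonlocalOp

variable {K f : ℤ → ℝ}

theorem summable_mul_kernel_sub (hf : Memℓp f ∞) (hK : Summable K) (j : ℤ) :
    Summable fun k => f k * K (j - k) := by
  obtain ⟨C, hC⟩ := hf.bddAbove
  refine Summable.of_norm_bounded
    ((((Equiv.subLeft j).summable_iff.mpr hK).abs).mul_left C) fun k => ?_
  rw [norm_mul, Real.norm_eq_abs (K _)]
  exact mul_le_mul_of_nonneg_right (hC ⟨k, rfl⟩) (abs_nonneg _)

theorem summable_nonlocalOp_term (hf : Memℓp f ∞) (hK : Summable K) (j : ℤ) :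
    Summable fun k => (f k - f j) * K (j - k) := by
  simp_rw [sub_mul]
  exact (summable_mul_kernel_sub hf hK j).sub (((Equiv.subLeft j).summable_iff.mpr hK).mul_left _)

theorem nonlocalOp_eq (hf : Memℓp f ∞) (hK : Summable K) (j : ℤ) :
    nonlocalOp K f j = ∑' k, f k * K (j - k) - f j * ∑' m, K m := by
  have hK' : Summable fun k => K (j - k) := (Equiv.subLeft j).summable_iff.mpr hK
  rw [nonlocalOp, ← (Equiv.subLeft j).tsum_eq K, ← tsum_mul_left]
  simp only [Equiv.subLeft_apply]
  rw [← (summable_mul_kernel_sub hf hK j).tsum_sub (hK'.mul_left _)]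
  simp only [sub_mul]

theorem nonlocalOp_comp_addRight (a j : ℤ) :
    nonlocalOp K (fun i => f (i + a)) j = nonlocalOp K f (j + a) := by
  rw [nonlocalOp, nonlocalOp,
    ← (Equiv.addRight a).tsum_eq fun k => (f k - f (j + a)) * K (j + a - k)]
  simp only [Equiv.coe_addRight, add_sub_add_right_eq_sub]

theorem nonlocalOp_Dc (dx : ℝ) (hf : Memℓp f ∞) (hK : Summable K) :
    nonlocalOp K (Dc dx f) = Dc dx (nonlocalOp K f) := by
  funext j
  have hshift (a : ℤ) : Summable fun k => (f (k + a) - f (j + a)) * K (j - k) :=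
    summable_nonlocalOp_term (hf.comp_equiv (Equiv.addRight a)) hK j
  calc nonlocalOp K (Dc dx f) j
      = ∑' k, ((f (k + 1) - f (j + 1)) * K (j - k) - (f (k + -1) - f (j + -1)) * K (j - k))
          / (2 * dx) := by
        refine tsum_congr fun k => ?_
        simp only [Dc, ← sub_eq_add_neg]
        ring
    _ = (nonlocalOp K f (j + 1) - nonlocalOp K f (j + -1)) / (2 * dx) := by
        rw [tsum_div_const, (hshift 1).tsum_sub (hshift (-1)), ← nonlocalOp_comp_addRight,
          ← nonlocalOp_comp_addRight]
        rfl
    _ = Dc dx (nonlocalOp K f) j := by rw [Dc, ← sub_eq_add_neg]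

theorem hasSum_nonlocalOp_mul {g : ℤ → ℝ} (hf : Memℓp f 2) (hg : Memℓp g 2) (hK : Summable K) :
    HasSum (fun j => nonlocalOp K f j * g j)
      ((∑' p : ℤ × ℤ, g p.1 * f p.2 * K (p.1 - p.2)) - (∑' j, f j * g j) * ∑' m, K m) := by
  have hB := summable_mul_mul_kernel_sub hg hf hK
  have hdouble := hB.hasSum.prod_fiberwise fun j => (hB.prod_factor j).hasSum
  refine (hdouble.sub ((hf.summable_mul hg).hasSum.mul_right (∑' m, K m))).congr_fun fun j => ?_
  rw [nonlocalOp_eq (hf.of_exponent_ge le_top) hK, sub_mul, ← tsum_mul_right]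
  congr 1
  · exact tsum_congr fun k => by ring
  · ring

theorem tsum_nonlocalOp_mul_comm {g : ℤ → ℝ} (hf : Memℓp f 2) (hg : Memℓp g 2) (hK : Summable K)
    (hK_neg : ∀ m, K (-m) = K m) :
    ∑' j, nonlocalOp K f j * g j = ∑' j, f j * nonlocalOp K g j := by
  simp_rw [mul_comm (f _) (nonlocalOp K g _)]
  rw [(hasSum_nonlocalOp_mul hf hg hK).tsum_eq, (hasSum_nonlocalOp_mul hg hf hK).tsum_eq,
    ← (Equiv.prodComm ℤ ℤ).tsum_eq]
  simp only [Equiv.prodComm_apply, Prod.fst_swap, Prod.snd_swap, mul_comm (g _) (f _)]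
  congr 2
  funext p
  rw [← hK_neg, neg_sub]

end nonlocalOp

theorem memℓp_Dc {p : ℝ≥0∞} {f : ℤ → ℝ} (hf : Memℓp f p) (dx : ℝ) : Memℓp (Dc dx f) p := by
  have hdiff : Memℓp (fun j => f (j + 1) - f (j - 1)) p :=
    (hf.comp_equiv (Equiv.addRight 1)).sub (hf.comp_equiv (Equiv.subRight 1))
  have hDc : Dc dx f = fun j => (2 * dx)⁻¹ * (f (j + 1) - f (j - 1)) :=
    funext fun j => by rw [Dc, inv_mul_eq_div]
  rw [hDc]
  exact hdiff.const_mul _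

theorem tsum_Dc_mul (dx : ℝ) {f g : ℤ → ℝ} (hnext : Summable fun j => f (j + 1) * g j)
    (hprev : Summable fun j => f (j - 1) * g j) :
    ∑' j, Dc dx f j * g j = -∑' j, f j * Dc dx g j := by
  have enext (F : ℤ → ℝ) : ∑' j, F (j + 1) = ∑' j, F j := (Equiv.addRight 1).tsum_eq F
  have eprev (F : ℤ → ℝ) : ∑' j, F (j - 1) = ∑' j, F j := (Equiv.subRight 1).tsum_eq F
  have snext : Summable fun j => f j * g (j + 1) :=
    (Equiv.subRight 1).summable_iff.mp (by simpa [Function.comp_def] using hprev)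
  have sprev : Summable fun j => f j * g (j - 1) :=
    (Equiv.addRight 1).summable_iff.mp (by simpa [Function.comp_def] using hnext)
  calc ∑' j, Dc dx f j * g j
      = ((∑' j, f (j + 1) * g j) - ∑' j, f (j - 1) * g j) / (2 * dx) := by
        rw [← hnext.tsum_sub hprev, ← tsum_div_const]
        exact tsum_congr fun j => by rw [Dc]; ring
    _ = -(((∑' j, f j * g (j + 1)) - ∑' j, f j * g (j - 1)) / (2 * dx)) := by
        rw [← eprev fun j => f j * g (j + 1), ← enext fun j => f j * g (j - 1)]
        simp only [sub_add_cancel, add_sub_cancel_right]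
        ring
    _ = -∑' j, f j * Dc dx g j := by
        rw [← snext.tsum_sub sprev, ← tsum_div_const]
        exact congrArg _ (tsum_congr fun j => by rw [Dc]; ring)

theorem tsum_nonlocalOp_Dc_mul {K u v : ℤ → ℝ} (dx : ℝ) (hu : Memℓp u 2) (hv : Memℓp v 2)
    (hK : Summable K) (hK_neg : ∀ m, K (-m) = K m) :
    ∑' j, nonlocalOp K (Dc dx u) j * v j = -∑' j, u j * nonlocalOp K (Dc dx v) j := by
  have hshift (a : ℤ) : Summable fun j => nonlocalOp K u (j + a) * v j := by
    simp_rw [← nonlocalOp_comp_addRight]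
    exact (hasSum_nonlocalOp_mul (hu.comp_equiv (Equiv.addRight a)) hv hK).summable
  rw [nonlocalOp_Dc dx (hu.of_exponent_ge le_top) hK,
    tsum_Dc_mul dx (hshift 1) (by simpa [← sub_eq_add_neg] using hshift (-1)),
    tsum_nonlocalOp_mul_comm hu (memℓp_Dc hv dx) hK hK_neg]

noncomputable def fracKernel (α : ℝ) (m : ℤ) : ℝ :=
  (1 - (-1 : ℝ) ^ m) / ((|m| : ℤ) : ℝ) ^ (1 + α)

theorem fracKernel_neg (α : ℝ) (m : ℤ) : fracKernel α (-m) = fracKernel α m := by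
  rw [fracKernel, fracKernel, abs_neg, ← inv_zpow', inv_neg, inv_one]

theorem summable_fracKernel {α : ℝ} (hα : 0 < α) : Summable (fracKernel α) := by
  have hp : Summable fun m : ℤ => |(m : ℝ)| ^ (-(1 + α)) :=
    Real.summable_abs_int_rpow (by linarith)
  refine Summable.of_norm_bounded (hp.mul_left 2) fun m => ?_
  rcases eq_or_ne m 0 with rfl | hm
  · simp only [fracKernel, zpow_zero, sub_self, zero_div, norm_zero]
    positivity
  have hm' : 0 < |(m : ℝ)| := abs_pos.mpr (Int.cast_ne_zero.mpr hm)
  rw [Real.norm_eq_abs, fracKernel, abs_div, Int.cast_abs, Real.rpow_neg hm'.le, ← div_eq_mul_inv,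
    abs_of_nonneg (Real.rpow_nonneg (abs_nonneg (m : ℝ)) _)]
  gcongr
  calc |1 - (-1 : ℝ) ^ m| ≤ |1| + |(-1 : ℝ) ^ m| := abs_sub _ _
    _ = 2 := by rw [abs_zpow, abs_neg, abs_one, one_zpow]; norm_num

theorem fracLap_eq_nonlocalOp (cα α dx : ℝ) :
    fracLap cα α dx = nonlocalOp fun m => cα / dx ^ α * fracKernel α m := by
  funext f j
  have hsupp : Function.support (fun k => (f k - f j) * (cα / dx ^ α * fracKernel α (j - k)))
      ⊆ {k | k ≠ j} := fun k hk hkj => hk (by simp [hkj])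
  rw [fracLap, nonlocalOp, ← tsum_mul_left, ← tsum_subtype_eq_of_support_subset hsupp]
  refine tsum_congr fun k => ?_
  rw [fracKernel, abs_sub_comm]
  ring

theorem fracLap_comm_central_general (cα α dx : ℝ) (hα : α ∈ Set.Ico (1 : ℝ) 2)
    (u v : ℤ → ℝ) (hu : Memℓp u 2) (hv : Memℓp v 2) :
    ip dx (fracLap cα α dx (Dc dx u)) v = - ip dx u (fracLap cα α dx (Dc dx v)) ∧
      ip dx (fracLap cα α dx (Dc dx u)) v = ip dx (Dc dx (fracLap cα α dx u)) v := by
  have hK : Summable fun m => cα / dx ^ α * fracKernel α m :=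
    (summable_fracKernel (by linarith [hα.1])).mul_left _
  have hK_neg (m : ℤ) : cα / dx ^ α * fracKernel α (-m) = cα / dx ^ α * fracKernel α m := by
    rw [fracKernel_neg]
  rw [fracLap_eq_nonlocalOp]
  refine ⟨?_, by rw [nonlocalOp_Dc dx (hu.of_exponent_ge le_top) hK]⟩
  rw [ip, ip, tsum_nonlocalOp_Dc_mul dx hu hv hK hK_neg, mul_neg]

/-- The discrete fractional Laplacian commutes with the central difference in the weak
sense: ⟨𝔻^α(Du), v⟩ = -⟨u, 𝔻^α(Dv)⟩ = ⟨D(𝔻^α u), v⟩. -/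
theorem fracLap_comm_central (cα α dx : ℝ) (hcα : 0 < cα) (hα : α ∈ Set.Ico (1 : ℝ) 2)
    (hdx : 0 < dx) (u v : ℤ → ℝ) (hu : Memℓp u 2) (hv : Memℓp v 2) :
    ip dx (fracLap cα α dx (Dc dx u)) v = - ip dx u (fracLap cα α dx (Dc dx v)) ∧
      ip dx (fracLap cα α dx (Dc dx u)) v = ip dx (Dc dx (fracLap cα α dx u)) v :=
  fracLap_comm_central_general cα α dx hα u v hu hv
end

section
/- For every u ∈ ℓ²(ℤ), the discrete fractional dispersion term is orthogonal to u: ⟨𝔻^α(Du), u⟩ = 0, where 𝔻^α is the discrete fractional Laplacian and D the central difference operator. -/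
open scoped ENNReal

/-! ### Auxiliary kernel lemmas -/

/-- The dispersion kernel `W(m) = (1 - (-1)^m)/|m|^(1+α)`. -/
noncomputable def Wker (α : ℝ) (m : ℤ) : ℝ := (1 - (-1 : ℝ) ^ m) / ((|m| : ℤ) : ℝ) ^ (1 + α)

lemma neg_one_zpow_neg' (m : ℤ) : (-1 : ℝ) ^ (-m) = (-1 : ℝ) ^ m := by
  rw [zpow_neg, ← inv_zpow, inv_neg, inv_one]

lemma Wker_neg (α : ℝ) (m : ℤ) : Wker α (-m) = Wker α m := by
  unfold Wker; rw [abs_neg, neg_one_zpow_neg']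

lemma Wker_zero (α : ℝ) : Wker α 0 = 0 := by simp [Wker]

lemma abs_mul_le_half (a b : ℝ) : |a * b| ≤ a ^ 2 / 2 + b ^ 2 / 2 := by
  rw [abs_mul]
  nlinarith [sq_nonneg (|a| - |b|), sq_abs a, sq_abs b, abs_nonneg a, abs_nonneg b]

lemma abs_mul3_le (x w y : ℝ) : |x * w * y| ≤ |w| * (x ^ 2 / 2) + |w| * (y ^ 2 / 2) := by
  have h : |x| * |y| ≤ x ^ 2 / 2 + y ^ 2 / 2 := by rw [← abs_mul]; exact abs_mul_le_half x y
  calc |x * w * y| = |w| * (|x| * |y|) := by rw [abs_mul, abs_mul]; ring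
    _ ≤ |w| * (x ^ 2 / 2 + y ^ 2 / 2) := mul_le_mul_of_nonneg_left h (abs_nonneg w)
    _ = |w| * (x ^ 2 / 2) + |w| * (y ^ 2 / 2) := by ring

lemma summable_abs_Wker {α : ℝ} (hα1 : (1 : ℝ) ≤ α) : Summable fun m => |Wker α m| := by
  have hb : (1 : ℝ) < 1 + α := by linarith
  have h2 : Summable fun m : ℤ => 2 * |(m : ℝ)| ^ (-(1 + α)) :=
    (Real.summable_abs_int_rpow hb).mul_left 2
  refine h2.of_nonneg_of_le (fun m => abs_nonneg _) fun m => ?_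
  by_cases hm : m = 0
  · subst hm
    rw [Wker_zero, abs_zero]
    positivity
  · have hm' : ((m : ℝ)) ≠ 0 := Int.cast_ne_zero.mpr hm
    have hpos : (0 : ℝ) < |(m : ℝ)| := abs_pos.mpr hm'
    have hnum : |1 - (-1 : ℝ) ^ m| ≤ 2 := by
      have h1 : |(-1 : ℝ) ^ m| = 1 := by
        rcases Int.even_or_odd m with h | h
        · rw [h.neg_one_zpow, abs_one]
        · rw [h.neg_one_zpow, abs_neg, abs_one]
      rw [sub_eq_add_neg]
      refine (abs_add_le _ _).trans ?_
      rw [abs_neg, h1, abs_one]; norm_num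
    have hcast : ((|m| : ℤ) : ℝ) = |(m : ℝ)| := by push_cast; ring
    unfold Wker
    rw [abs_div, hcast, abs_of_pos (Real.rpow_pos_of_pos hpos _),
      Real.rpow_neg (abs_nonneg _), ← div_eq_mul_inv]
    gcongr

/-! ### Product summability via shear equivalences -/

/-- shear equivalence `(m,k) ↦ (m+k,k)` -/
def shearE : ℤ × ℤ ≃ ℤ × ℤ where
  toFun p := (p.1 + p.2, p.2)
  invFun p := (p.1 - p.2, p.2)
  left_inv p := by simp
  right_inv p := by simp

/-- shear equivalence `(j,m) ↦ (j,j−m)`, self-inverse -/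
def shearE2 : ℤ × ℤ ≃ ℤ × ℤ where
  toFun p := (p.1, p.1 - p.2)
  invFun p := (p.1, p.1 - p.2)
  left_inv p := by simp
  right_inv p := by simp

lemma summable_kernel_right {g h : ℤ → ℝ} (hg : Summable g) (hh : Summable h)
    (hg0 : ∀ m, 0 ≤ g m) (hh0 : ∀ m, 0 ≤ h m) :
    Summable fun p : ℤ × ℤ => g (p.1 - p.2) * h p.2 := by
  have base : Summable fun p : ℤ × ℤ => g p.1 * h p.2 :=
    hg.mul_of_nonneg hh (fun m => hg0 m) fun m => hh0 m
  refine (shearE.summable_iff (f := fun p : ℤ × ℤ => g (p.1 - p.2) * h p.2)).mp ?_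
  refine base.congr fun p => ?_
  simp [shearE]

lemma summable_kernel_left {g h : ℤ → ℝ} (hg : Summable g) (hh : Summable h)
    (hg0 : ∀ m, 0 ≤ g m) (hh0 : ∀ m, 0 ≤ h m) :
    Summable fun p : ℤ × ℤ => g (p.1 - p.2) * h p.1 := by
  have base : Summable fun p : ℤ × ℤ => h p.1 * g p.2 :=
    hh.mul_of_nonneg hg (fun m => hh0 m) fun m => hg0 m
  refine (shearE2.summable_iff (f := fun p : ℤ × ℤ => g (p.1 - p.2) * h p.1)).mp ?_
  refine base.congr fun p => ?_
  simp [shearE2, mul_comm]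

lemma summable_prod_bound {f : ℤ × ℤ → ℝ} {g h1 h2 : ℤ → ℝ}
    (hg : Summable g) (hh1 : Summable h1) (hh2 : Summable h2)
    (hg0 : ∀ m, 0 ≤ g m) (hh10 : ∀ m, 0 ≤ h1 m) (hh20 : ∀ m, 0 ≤ h2 m)
    (hb : ∀ p : ℤ × ℤ, |f p| ≤ g (p.1 - p.2) * h1 p.2 + g (p.1 - p.2) * h2 p.1) :
    Summable f := by
  have hs : Summable fun p : ℤ × ℤ => g (p.1 - p.2) * h1 p.2 + g (p.1 - p.2) * h2 p.1 :=
    (summable_kernel_right hg hh1 hg0 hh10).add (summable_kernel_left hg hh2 hg0 hh20)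
  exact summable_abs_iff.mp (hs.of_nonneg_of_le (fun p => abs_nonneg _) hb)

/-- Orthogonality of the discrete fractional dispersion term: ⟨𝔻^α(Du), u⟩ = 0. -/
theorem fracLap_central_orthogonal (cα α dx : ℝ) (hcα : 0 < cα)
    (hα : α ∈ Set.Ico (1 : ℝ) 2) (hdx : 0 < dx) (u : ℤ → ℝ) (hu : Memℓp u 2) :
    ip dx (fracLap cα α dx (Dc dx u)) u = 0 := by
  obtain ⟨hα1, -⟩ := hα
  set v : ℤ → ℝ := Dc dx u with hvdef
  -- kernel summability
  have hgW : Summable fun m => |Wker α m| := summable_abs_Wker hα1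
  have hWsum : Summable (Wker α) := summable_abs_iff.mp hgW
  have hgW0 : ∀ m : ℤ, 0 ≤ |Wker α m| := fun m => abs_nonneg _
  -- ℓ² facts
  have hu2 : Summable fun j => u j ^ 2 := by
    have h0 : Summable fun j => ‖u j‖ ^ (2 : ℝ≥0∞).toReal :=
      (memℓp_gen_iff (by norm_num)).mp hu
    refine h0.congr fun j => ?_
    rw [ENNReal.toReal_ofNat, Real.rpow_two, Real.norm_eq_abs, sq_abs]
  have hu2p : Summable fun j => u (j + 1) ^ 2 := by
    simpa [Function.comp_def] using (Equiv.addRight (1 : ℤ)).summable_iff.mpr hu2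
  have hu2m : Summable fun j => u (j - 1) ^ 2 := by
    simpa [Function.comp_def] using (Equiv.subRight (1 : ℤ)).summable_iff.mpr hu2
  have hv2 : Summable fun j => v j ^ 2 := by
    have hmaj : Summable fun j => ((2 * dx) ^ 2)⁻¹ * (2 * u (j + 1) ^ 2 + 2 * u (j - 1) ^ 2) :=
      ((hu2p.mul_left 2).add (hu2m.mul_left 2)).mul_left _
    refine hmaj.of_nonneg_of_le (fun j => sq_nonneg _) fun j => ?_
    have hdx2 : (0 : ℝ) < (2 * dx) ^ 2 := by positivity
    show ((u (j + 1) - u (j - 1)) / (2 * dx)) ^ 2 ≤ _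
    rw [div_pow, inv_mul_eq_div]
    gcongr
    nlinarith [sq_nonneg (u (j + 1) + u (j - 1))]
  have hvu : Summable fun j => |v j * u j| := by
    refine ((hv2.div_const 2).add (hu2.div_const 2)).of_nonneg_of_le
      (fun j => abs_nonneg _) fun j => abs_mul_le_half _ _
  have hvusum : Summable fun j => v j * u j := summable_abs_iff.mp hvu
  -- the kernel K(m) = W(m+1) - W(m-1), which is odd
  set K : ℤ → ℝ := fun m => Wker α (m + 1) - Wker α (m - 1) with hKdef
  have hKsum : Summable K := by
    have h1 : Summable fun m : ℤ => Wker α (m + 1) := by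
      simpa [Function.comp_def] using (Equiv.addRight (1 : ℤ)).summable_iff.mpr hWsum
    have h2 : Summable fun m : ℤ => Wker α (m - 1) := by
      simpa [Function.comp_def] using (Equiv.subRight (1 : ℤ)).summable_iff.mpr hWsum
    exact h1.sub h2
  have hgK : Summable fun m => |K m| := summable_abs_iff.mpr hKsum
  have hgK0 : ∀ m : ℤ, 0 ≤ |K m| := fun m => abs_nonneg _
  have hKodd : ∀ m : ℤ, K (-m) = -K m := by
    intro m
    show Wker α (-m + 1) - Wker α (-m - 1) = -(Wker α (m + 1) - Wker α (m - 1))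
    rw [show (-m + 1 : ℤ) = -(m - 1) by ring, show (-m - 1 : ℤ) = -(m + 1) by ring,
      Wker_neg, Wker_neg]
    ring
  -- summability of the various double sums
  have hFsum : Summable fun p : ℤ × ℤ => (v p.2 - v p.1) * Wker α (p.1 - p.2) * u p.1 := by
    refine summable_prod_bound hgW (hv2.div_const 2) ((hv2.div_const 2).add hu2) hgW0
      (fun k => by positivity) (fun j => by positivity) fun p => ?_
    have hsplit : |(v p.2 - v p.1) * Wker α (p.1 - p.2) * u p.1|
        ≤ |v p.2 * Wker α (p.1 - p.2) * u p.1| + |v p.1 * Wker α (p.1 - p.2) * u p.1| := by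
      have : (v p.2 - v p.1) * Wker α (p.1 - p.2) * u p.1
          = v p.2 * Wker α (p.1 - p.2) * u p.1 - v p.1 * Wker α (p.1 - p.2) * u p.1 := by ring
      rw [this]
      exact abs_sub _ _
    refine hsplit.trans ?_
    have h1 := abs_mul3_le (v p.2) (Wker α (p.1 - p.2)) (u p.1)
    have h2 := abs_mul3_le (v p.1) (Wker α (p.1 - p.2)) (u p.1)
    calc |v p.2 * Wker α (p.1 - p.2) * u p.1| + |v p.1 * Wker α (p.1 - p.2) * u p.1|
        ≤ (|Wker α (p.1 - p.2)| * (v p.2 ^ 2 / 2) + |Wker α (p.1 - p.2)| * (u p.1 ^ 2 / 2))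
          + (|Wker α (p.1 - p.2)| * (v p.1 ^ 2 / 2) + |Wker α (p.1 - p.2)| * (u p.1 ^ 2 / 2)) :=
          add_le_add h1 h2
      _ = |Wker α (p.1 - p.2)| * (v p.2 ^ 2 / 2)
          + |Wker α (p.1 - p.2)| * (v p.1 ^ 2 / 2 + u p.1 ^ 2) := by ring
  have hAsum : Summable fun p : ℤ × ℤ => v p.2 * Wker α (p.1 - p.2) * u p.1 :=
    summable_prod_bound hgW (hv2.div_const 2) (hu2.div_const 2) hgW0
      (fun k => by positivity) (fun j => by positivity) fun p => abs_mul3_le _ _ _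
  have hBsum : Summable fun p : ℤ × ℤ => v p.1 * Wker α (p.1 - p.2) * u p.1 := by
    refine summable_prod_bound hgW summable_zero
      ((hv2.div_const 2).add (hu2.div_const 2)) hgW0
      (fun k => le_rfl) (fun j => by positivity) fun p => ?_
    refine (abs_mul3_le _ _ _).trans (le_of_eq ?_)
    ring
  have hA1sum : Summable fun p : ℤ × ℤ => u (p.2 + 1) * Wker α (p.1 - p.2) * u p.1 :=
    summable_prod_bound hgW (hu2p.div_const 2) (hu2.div_const 2) hgW0
      (fun k => by positivity) (fun j => by positivity) fun p => abs_mul3_le _ _ _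
  have hA2sum : Summable fun p : ℤ × ℤ => u (p.2 - 1) * Wker α (p.1 - p.2) * u p.1 :=
    summable_prod_bound hgW (hu2m.div_const 2) (hu2.div_const 2) hgW0
      (fun k => by positivity) (fun j => by positivity) fun p => abs_mul3_le _ _ _
  have hA3sum : Summable fun p : ℤ × ℤ => u p.2 * K (p.1 - p.2) * u p.1 :=
    summable_prod_bound hgK (hu2.div_const 2) (hu2.div_const 2) hgK0
      (fun k => by positivity) (fun j => by positivity) fun p => abs_mul3_le _ _ _
  -- ∑' j, v j * u j = 0 by summation by parts
  have hp1 : Summable fun j => u (j + 1) * u j := by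
    refine summable_abs_iff.mp (((hu2p.div_const 2).add (hu2.div_const 2)).of_nonneg_of_le
      (fun j => abs_nonneg _) fun j => abs_mul_le_half _ _)
  have hp2 : Summable fun j => u (j - 1) * u j := by
    refine summable_abs_iff.mp (((hu2m.div_const 2).add (hu2.div_const 2)).of_nonneg_of_le
      (fun j => abs_nonneg _) fun j => abs_mul_le_half _ _)
  have hshift : ∑' j : ℤ, u (j + 1) * u j = ∑' j : ℤ, u (j - 1) * u j := by
    rw [← (Equiv.subRight (1 : ℤ)).tsum_eq (fun j : ℤ => u (j + 1) * u j)]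
    refine tsum_congr fun j => ?_
    show u (j - 1 + 1) * u (j - 1) = u (j - 1) * u j
    rw [sub_add_cancel]; ring
  have hvu0 : ∑' j : ℤ, v j * u j = 0 := by
    have hsp : ∀ j : ℤ, v j * u j
        = (2 * dx)⁻¹ * (u (j + 1) * u j) - (2 * dx)⁻¹ * (u (j - 1) * u j) := by
      intro j
      show (u (j + 1) - u (j - 1)) / (2 * dx) * u j = _
      rw [div_eq_mul_inv]; ring
    rw [tsum_congr hsp, Summable.tsum_sub (hp1.mul_left _) (hp2.mul_left _),
      tsum_mul_left, tsum_mul_left, hshift, sub_self]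
  -- B-sum vanishes
  have hB0 : ∑' p : ℤ × ℤ, v p.1 * Wker α (p.1 - p.2) * u p.1 = 0 := by
    rw [Summable.tsum_prod' hBsum fun j => hBsum.prod_factor j]
    have hin : ∀ j : ℤ, ∑' k : ℤ, v j * Wker α (j - k) * u j
        = (v j * u j) * ∑' m : ℤ, Wker α m := by
      intro j
      rw [show (fun k : ℤ => v j * Wker α (j - k) * u j)
          = fun k : ℤ => (v j * u j) * Wker α (j - k) from funext fun k => by ring]
      rw [tsum_mul_left]
      congr 1
      exact (Equiv.subLeft j).tsum_eq (Wker α)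
    rw [tsum_congr hin, tsum_mul_right, hvu0, zero_mul]
  -- A-sum vanishes (reindex + odd kernel)
  have hA30 : ∑' p : ℤ × ℤ, u p.2 * K (p.1 - p.2) * u p.1 = 0 := by
    have hswap := (Equiv.prodComm ℤ ℤ).tsum_eq (fun p : ℤ × ℤ => u p.2 * K (p.1 - p.2) * u p.1)
    have hneg : ∑' p : ℤ × ℤ,
        (fun p : ℤ × ℤ => u p.2 * K (p.1 - p.2) * u p.1) ((Equiv.prodComm ℤ ℤ) p)
        = ∑' p : ℤ × ℤ, -(u p.2 * K (p.1 - p.2) * u p.1) := by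
      refine tsum_congr fun p => ?_
      show u p.1 * K (p.2 - p.1) * u p.2 = _
      rw [show p.2 - p.1 = -(p.1 - p.2) by ring, hKodd]
      ring
    rw [hneg, tsum_neg] at hswap
    linarith
  have hS1sum : Summable fun p : ℤ × ℤ => u p.2 * Wker α (p.1 - p.2 + 1) * u p.1 := by
    refine ((Equiv.prodCongr (Equiv.refl ℤ) (Equiv.subRight (1 : ℤ))).summable_iff
      (f := fun p : ℤ × ℤ => u (p.2 + 1) * Wker α (p.1 - p.2) * u p.1)).mpr hA1sum |>.congr
      fun p => ?_
    show u (p.2 - 1 + 1) * Wker α (p.1 - (p.2 - 1)) * u p.1 = _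
    rw [sub_add_cancel, show p.1 - (p.2 - 1) = p.1 - p.2 + 1 by ring]
  have hS2sum : Summable fun p : ℤ × ℤ => u p.2 * Wker α (p.1 - p.2 - 1) * u p.1 := by
    refine ((Equiv.prodCongr (Equiv.refl ℤ) (Equiv.addRight (1 : ℤ))).summable_iff
      (f := fun p : ℤ × ℤ => u (p.2 - 1) * Wker α (p.1 - p.2) * u p.1)).mpr hA2sum |>.congr
      fun p => ?_
    show u (p.2 + 1 - 1) * Wker α (p.1 - (p.2 + 1)) * u p.1 = _
    rw [add_sub_cancel_right, show p.1 - (p.2 + 1) = p.1 - p.2 - 1 by ring]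
  have h1 : ∑' p : ℤ × ℤ, u (p.2 + 1) * Wker α (p.1 - p.2) * u p.1
      = ∑' p : ℤ × ℤ, u p.2 * Wker α (p.1 - p.2 + 1) * u p.1 := by
    rw [← (Equiv.prodCongr (Equiv.refl ℤ) (Equiv.subRight (1 : ℤ))).tsum_eq
      (fun p : ℤ × ℤ => u (p.2 + 1) * Wker α (p.1 - p.2) * u p.1)]
    refine tsum_congr fun p => ?_
    show u (p.2 - 1 + 1) * Wker α (p.1 - (p.2 - 1)) * u p.1 = _
    rw [sub_add_cancel, show p.1 - (p.2 - 1) = p.1 - p.2 + 1 by ring]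
  have h2 : ∑' p : ℤ × ℤ, u (p.2 - 1) * Wker α (p.1 - p.2) * u p.1
      = ∑' p : ℤ × ℤ, u p.2 * Wker α (p.1 - p.2 - 1) * u p.1 := by
    rw [← (Equiv.prodCongr (Equiv.refl ℤ) (Equiv.addRight (1 : ℤ))).tsum_eq
      (fun p : ℤ × ℤ => u (p.2 - 1) * Wker α (p.1 - p.2) * u p.1)]
    refine tsum_congr fun p => ?_
    show u (p.2 + 1 - 1) * Wker α (p.1 - (p.2 + 1)) * u p.1 = _
    rw [add_sub_cancel_right, show p.1 - (p.2 + 1) = p.1 - p.2 - 1 by ring]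
  have hA0 : ∑' p : ℤ × ℤ, v p.2 * Wker α (p.1 - p.2) * u p.1 = 0 := by
    have hAsplit : ∀ p : ℤ × ℤ, v p.2 * Wker α (p.1 - p.2) * u p.1
        = (2 * dx)⁻¹ * (u (p.2 + 1) * Wker α (p.1 - p.2) * u p.1)
          - (2 * dx)⁻¹ * (u (p.2 - 1) * Wker α (p.1 - p.2) * u p.1) := by
      intro p
      show (u (p.2 + 1) - u (p.2 - 1)) / (2 * dx) * Wker α (p.1 - p.2) * u p.1 = _
      rw [div_eq_mul_inv]; ring
    rw [tsum_congr hAsplit, Summable.tsum_sub (hA1sum.mul_left _) (hA2sum.mul_left _),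
      tsum_mul_left, tsum_mul_left, h1, h2, ← mul_sub, ← Summable.tsum_sub hS1sum hS2sum]
    have : ∑' p : ℤ × ℤ, (u p.2 * Wker α (p.1 - p.2 + 1) * u p.1
        - u p.2 * Wker α (p.1 - p.2 - 1) * u p.1) = ∑' p : ℤ × ℤ, u p.2 * K (p.1 - p.2) * u p.1 := by
      refine tsum_congr fun p => ?_
      show _ = u p.2 * (Wker α (p.1 - p.2 + 1) - Wker α (p.1 - p.2 - 1)) * u p.1
      ring
    rw [this, hA30, mul_zero]
  -- the full double sum vanishes
  have key : ∑' p : ℤ × ℤ, (v p.2 - v p.1) * Wker α (p.1 - p.2) * u p.1 = 0 := by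
    have hsplit : ∀ p : ℤ × ℤ, (v p.2 - v p.1) * Wker α (p.1 - p.2) * u p.1
        = v p.2 * Wker α (p.1 - p.2) * u p.1 - v p.1 * Wker α (p.1 - p.2) * u p.1 :=
      fun p => by ring
    rw [tsum_congr hsplit, Summable.tsum_sub hAsum hBsum, hA0, hB0, sub_zero]
  -- rewrite fracLap using the kernel W
  have hfrac : ∀ j : ℤ, fracLap cα α dx v j
      = (cα / dx ^ α) * ∑' k : ℤ, (v k - v j) * Wker α (j - k) := by
    intro j
    unfold fracLap
    congr 1
    have hsupp : Function.support (fun k : ℤ =>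
        (v k - v j) * (1 - (-1 : ℝ) ^ (j - k)) / ((|k - j| : ℤ) : ℝ) ^ (1 + α))
        ⊆ {k : ℤ | k ≠ j} := by
      intro k hk
      simp only [Function.mem_support] at hk
      intro hkj
      apply hk
      subst hkj
      simp
    calc (∑' k : {k : ℤ // k ≠ j},
          (v k - v j) * (1 - (-1 : ℝ) ^ (j - (k : ℤ))) / ((|(k : ℤ) - j| : ℤ) : ℝ) ^ (1 + α))
        = ∑' k : ℤ, (v k - v j) * (1 - (-1 : ℝ) ^ (j - k)) / ((|k - j| : ℤ) : ℝ) ^ (1 + α) :=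
          tsum_subtype_eq_of_support_subset hsupp
      _ = ∑' k : ℤ, (v k - v j) * Wker α (j - k) := by
          refine tsum_congr fun k => ?_
          unfold Wker
          rw [abs_sub_comm k j, mul_div_assoc]
  -- put everything together
  have hterm : ∀ j : ℤ, fracLap cα α dx v j * u j
      = (cα / dx ^ α) * ∑' k : ℤ, ((v k - v j) * Wker α (j - k) * u j) := by
    intro j
    rw [hfrac j, mul_assoc, ← tsum_mul_right]
  have hdouble : ∑' j : ℤ, ∑' k : ℤ, ((v k - v j) * Wker α (j - k) * u j) = 0 :=
    (Summable.tsum_prod' hFsum fun j => hFsum.prod_factor j).symm.trans key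
  calc ip dx (fracLap cα α dx v) u
      = dx * ∑' j : ℤ, fracLap cα α dx v j * u j := rfl
    _ = dx * ∑' j : ℤ, (cα / dx ^ α) * ∑' k : ℤ, ((v k - v j) * Wker α (j - k) * u j) := by
        rw [tsum_congr hterm]
    _ = dx * ((cα / dx ^ α) * ∑' j : ℤ, ∑' k : ℤ, ((v k - v j) * Wker α (j - k) * u j)) := by
        rw [tsum_mul_left]
    _ = 0 := by rw [hdouble, mul_zero, mul_zero]
end

section
/- For any grid function u ∈ ℓ²(ℤ), the nonlinear term G(u) = ũ·Du is orthogonal to u: ⟨ũ·Du, u⟩ = 0, where ũ(j) = (u(j+1)+u(j)+u(j-1))/3 and Du(j) = (u(j+1)-u(j-1))/(2Δx). -/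
/-- Three-point average ũ(j) = (u(j+1)+u(j)+u(j-1))/3. -/
noncomputable def tilde (u : ℤ → ℝ) (j : ℤ) : ℝ := (u (j + 1) + u j + u (j - 1)) / 3

set_option maxHeartbeats 1000000 in
/-- The nonlinear term G(u) = ũ·Du is orthogonal to u: ⟨ũ·Du, u⟩ = 0. -/
theorem nonlinear_term_orthogonal (dx : ℝ) (hdx : 0 < dx) (u : ℤ → ℝ)
    (hu : Memℓp u 2) :
    ip dx (fun j => tilde u j * Dc dx u j) u = 0 := by
  have hdx' : dx ≠ 0 := ne_of_gt hdx
  -- summability of u^2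
  have hsq : Summable fun j : ℤ => (u j) ^ 2 := by
    have h := hu.summable (p := 2) (by norm_num)
    have : (fun j : ℤ => ‖u j‖ ^ ((2 : ENNReal).toReal)) = fun j : ℤ => (u j) ^ 2 := by
      funext j
      have : ((2 : ENNReal).toReal) = (2 : ℝ) := by norm_num
      rw [this]
      rw [show ((2:ℝ)) = ((2:ℕ) : ℝ) by norm_num, Real.rpow_natCast]
      simp [sq_abs, Real.norm_eq_abs]
    rwa [this] at h
  set S := ∑' j : ℤ, (u j) ^ 2 with hS
  have hbound : ∀ j, |u j| ≤ Real.sqrt S := by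
    intro j
    have h1 : (u j) ^ 2 ≤ S := Summable.le_tsum hsq j (fun _ _ => sq_nonneg _)
    have := Real.sqrt_le_sqrt h1
    rwa [Real.sqrt_sq_eq_abs] at this
  set F : ℤ → ℝ := fun j => u (j + 1) * u j * (u (j + 1) + u j) with hF
  -- summability of shifted squares
  have hsq1 : Summable fun j : ℤ => (u (j + 1)) ^ 2 :=
    ((Equiv.addRight (1 : ℤ)).summable_iff.mpr hsq)
  have hFsum : Summable F := by
    have hdom : Summable fun j : ℤ => Real.sqrt S * ((u (j + 1)) ^ 2 + (u j) ^ 2) :=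
      (hsq1.add hsq).mul_left _
    refine Summable.of_norm_bounded hdom ?_
    intro j
    rw [Real.norm_eq_abs]
    have h1 : |F j| = |u (j+1)| * |u j| * |u (j+1) + u j| := by
      rw [hF]; simp [abs_mul]
    rw [h1]
    have h2 : |u (j+1) + u j| ≤ |u (j+1)| + |u j| := abs_add_le _ _
    have h3 : |u (j+1)| * |u j| * |u (j+1) + u j| ≤
        |u (j+1)| * |u j| * (|u (j+1)| + |u j|) := by
      apply mul_le_mul_of_nonneg_left h2 (by positivity)
    refine h3.trans ?_
    have hb1 := hbound (j+1)
    have hb2 := hbound j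
    have expand : |u (j+1)| * |u j| * (|u (j+1)| + |u j|) =
        |u (j+1)| ^ 2 * |u j| + |u j| ^ 2 * |u (j+1)| := by ring
    rw [expand]
    have e1 : |u (j+1)| ^ 2 * |u j| ≤ Real.sqrt S * (u (j+1)) ^ 2 := by
      rw [sq_abs]
      calc (u (j+1)) ^ 2 * |u j| ≤ (u (j+1)) ^ 2 * Real.sqrt S :=
            mul_le_mul_of_nonneg_left hb2 (sq_nonneg _)
        _ = Real.sqrt S * (u (j+1)) ^ 2 := by ring
    have e2 : |u j| ^ 2 * |u (j+1)| ≤ Real.sqrt S * (u j) ^ 2 := by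
      rw [sq_abs]
      calc (u j) ^ 2 * |u (j+1)| ≤ (u j) ^ 2 * Real.sqrt S :=
            mul_le_mul_of_nonneg_left hb1 (sq_nonneg _)
        _ = Real.sqrt S * (u j) ^ 2 := by ring
    calc |u (j+1)| ^ 2 * |u j| + |u j| ^ 2 * |u (j+1)|
        ≤ Real.sqrt S * (u (j+1)) ^ 2 + Real.sqrt S * (u j) ^ 2 := add_le_add e1 e2
      _ = Real.sqrt S * ((u (j+1)) ^ 2 + (u j) ^ 2) := by ring
  -- shifted F summable
  have hFsum' : Summable fun j : ℤ => F (j - 1) := by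
    have := (Equiv.subRight (1 : ℤ)).summable_iff.mpr hFsum
    simpa [Function.comp_def, Equiv.subRight_apply] using this
  -- the telescoping identity
  have hkey : ∀ j : ℤ, tilde u j * Dc dx u j * u j = (F j - F (j - 1)) * (6 * dx)⁻¹ := by
    intro j
    rw [tilde, Dc, hF]
    simp only []
    have h1 : j - 1 + 1 = j := by ring
    rw [h1]
    field_simp
    ring
  -- compute the tsum
  have htsum : (∑' j : ℤ, tilde u j * Dc dx u j * u j) = 0 := by
    have e : (fun j : ℤ => tilde u j * Dc dx u j * u j) =
        fun j => (F j - F (j - 1)) * (6 * dx)⁻¹ := funext hkey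
    rw [e, tsum_mul_right]
    have : (∑' j : ℤ, (F j - F (j - 1))) = 0 := by
      rw [Summable.tsum_sub hFsum hFsum']
      have hshift : (∑' j : ℤ, F (j - 1)) = ∑' j : ℤ, F j := by
        have := (Equiv.subRight (1 : ℤ)).tsum_eq F
        simpa [Function.comp] using this
      rw [hshift, sub_self]
    rw [this, zero_mul]
  rw [ip]
  have : (∑' j : ℤ, (fun j => tilde u j * Dc dx u j) j * u j) =
      ∑' j : ℤ, tilde u j * Dc dx u j * u j := rfl
  rw [this, htsum, mul_zero]
end
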